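/- With G_eff(δ) = M^(2(δ−1)/(1−2δ))·((16π)^(δ−1)·A₀^(1−δ)·δ/G)^(1/(1−2δ)) for fixed M, A₀, G > 0, we have G_eff(δ) → 0 as δ → 0⁺, while the Tsallis entropy S_T(δ) = (A₀^(1−δ)/(4G))·A(δ)^δ with A(δ) = 16π·G_eff(δ)²·M² tends to A₀/(4G) ≠ 0 as δ → 0⁺. -/

import Mathlib

open Real Filter Set

/-- As δ → 0⁺, G_eff(δ) → 0 while S_T(δ) → A₀/(4G) ≠ 0. -/
theorem stmt_9 (M A₀ G : ℝ) (hM : 0 < M) (hA₀ : 0 < A₀) (hG : 0 < G)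
    (Geff ST : ℝ → ℝ)
    (hGeff : ∀ δ : ℝ, Geff δ =
      M ^ (2 * (δ - 1) / (1 - 2 * δ)) *
        ((16 * π) ^ (δ - 1) * A₀ ^ (1 - δ) * δ / G) ^ (1 / (1 - 2 * δ)))
    (hST : ∀ δ : ℝ, ST δ =
      A₀ ^ (1 - δ) / (4 * G) * (16 * π * (Geff δ) ^ 2 * M ^ 2) ^ δ) :
    Tendsto Geff (nhdsWithin 0 (Ioi 0)) (nhds 0) ∧
    Tendsto ST (nhdsWithin 0 (Ioi 0)) (nhds (A₀ / (4 * G))) ∧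
    A₀ / (4 * G) ≠ 0 := by
  have hpi : (0:ℝ) < 16 * π := by positivity
  set LM := Real.log M with hLM
  set LA := Real.log A₀ with hLA
  set LG := Real.log G with hLG
  set L16 := Real.log (16 * π) with hL16
  -- the log of Geff on (0, 1/2)
  set g : ℝ → ℝ := fun δ =>
    LM * (2 * (δ - 1) / (1 - 2 * δ)) +
      ((δ - 1) * L16 + (1 - δ) * LA + Real.log δ - LG) * (1 / (1 - 2 * δ)) with hg
  have hmem : Ioo (0:ℝ) (1/2) ∈ nhdsWithin (0:ℝ) (Ioi 0) :=
    Ioo_mem_nhdsGT_of_mem (by norm_num : (0:ℝ) ∈ Ico (0:ℝ) (1/2))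
  have hGeq : ∀ δ ∈ Ioo (0:ℝ) (1/2), Geff δ = Real.exp (g δ) := by
    intro δ hδ
    have hδ0 : 0 < δ := hδ.1
    have hC : 0 < (16 * π) ^ (δ - 1) * A₀ ^ (1 - δ) * δ / G := by positivity
    rw [hGeff δ, Real.rpow_def_of_pos hM, Real.rpow_def_of_pos hC, ← Real.exp_add]
    congr 1
    have hlogC : Real.log ((16 * π) ^ (δ - 1) * A₀ ^ (1 - δ) * δ / G)
        = (δ - 1) * L16 + (1 - δ) * LA + Real.log δ - LG := by
      rw [Real.log_div (by positivity) hG.ne', Real.log_mul (by positivity) hδ0.ne',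
        Real.log_mul (by positivity) (by positivity), Real.log_rpow hpi,
        Real.log_rpow hA₀]
    rw [hlogC, hg]
  -- limits of the coefficient functions
  have hden : Tendsto (fun δ : ℝ => 1 - 2 * δ) (nhds 0) (nhds 1) := by
    have : Tendsto (fun δ : ℝ => 1 - 2 * δ) (nhds 0) (nhds (1 - 2 * 0)) :=
      (tendsto_const_nhds.sub (tendsto_const_nhds.mul tendsto_id))
    simpa using this
  have hB : Tendsto (fun δ : ℝ => 1 / (1 - 2 * δ)) (nhds 0) (nhds 1) := by
    have := hden.inv₀ one_ne_zero
    simpa [one_div] using this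
  set Af : ℝ → ℝ := fun δ => LM * (2 * (δ - 1) / (1 - 2 * δ)) +
      ((δ - 1) * L16 + (1 - δ) * LA - LG) * (1 / (1 - 2 * δ)) with hAf
  have hAcont : ContinuousAt Af 0 := by
    rw [hAf]
    fun_prop (disch := norm_num)
  have hAfun : Tendsto Af (nhds 0) (nhds (Af 0)) := hAcont.tendsto
  have hAfun' := tendsto_nhdsWithin_of_tendsto_nhds (s := Ioi (0:ℝ)) hAfun
  have hB' := tendsto_nhdsWithin_of_tendsto_nhds (s := Ioi (0:ℝ)) hB
  -- g → -∞
  have hgsplit : ∀ δ : ℝ, g δ = Af δ +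
      Real.log δ * (1 / (1 - 2 * δ)) := by intro δ; rw [hg, hAf]; ring
  have hgbot : Tendsto g (nhdsWithin 0 (Ioi 0)) atBot := by
    rw [show g = fun δ => Af δ + Real.log δ * (1 / (1 - 2 * δ)) from funext hgsplit]
    exact hAfun'.add_atBot
      ((Real.tendsto_log_nhdsGT_zero.atBot_mul_pos one_pos hB'))
  have hGtend : Tendsto Geff (nhdsWithin 0 (Ioi 0)) (nhds 0) := by
    refine Tendsto.congr' ?_ (Real.tendsto_exp_atBot.comp hgbot)
    filter_upwards [hmem] with δ hδ
    exact (hGeq δ hδ).symm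
  refine ⟨hGtend, ?_, by positivity⟩
  -- ST part
  have hSTeq : ∀ δ ∈ Ioo (0:ℝ) (1/2), ST δ =
      Real.exp (LA * (1 - δ)) / (4 * G) *
        Real.exp ((L16 + 2 * g δ + 2 * LM) * δ) := by
    intro δ hδ
    have hE : 0 < Real.exp (g δ) := Real.exp_pos _
    rw [hST δ, hGeq δ hδ, Real.rpow_def_of_pos hA₀,
      Real.rpow_def_of_pos (by positivity : (0:ℝ) < 16 * π * Real.exp (g δ) ^ 2 * M ^ 2)]
    congr 3
    rw [Real.log_mul (by positivity) (by positivity),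
      Real.log_mul hpi.ne' (by positivity), Real.log_pow, Real.log_pow,
      Real.log_exp]
    push_cast
    ring
  -- limit of δ * g δ is 0
  have hdg : Tendsto (fun δ : ℝ => δ * g δ) (nhdsWithin 0 (Ioi 0)) (nhds 0) := by
    have hsplit : ∀ δ : ℝ, δ * g δ = δ * Af δ +
        (Real.log δ * δ) * (1 / (1 - 2 * δ)) := by
      intro δ; rw [hg, hAf]; ring
    rw [show (fun δ : ℝ => δ * g δ) = fun δ => δ * Af δ +
        (Real.log δ * δ) * (1 / (1 - 2 * δ)) from funext hsplit]
    have hld : Tendsto (fun δ : ℝ => Real.log δ * δ) (nhdsWithin 0 (Ioi 0)) (nhds 0) := by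
      have := tendsto_log_mul_rpow_nhdsGT_zero (r := 1) one_pos
      refine this.congr fun δ => by rw [Real.rpow_one]
    have h1 : Tendsto (fun δ : ℝ => δ * Af δ) (nhdsWithin 0 (Ioi 0)) (nhds (0 * Af 0)) :=
      (tendsto_nhdsWithin_of_tendsto_nhds tendsto_id).mul hAfun'
    have h2 := hld.mul hB'
    simpa using h1.add h2
  have hexp1 : Tendsto (fun δ : ℝ => Real.exp ((L16 + 2 * g δ + 2 * LM) * δ))
      (nhdsWithin 0 (Ioi 0)) (nhds 1) := by
    have harg : Tendsto (fun δ : ℝ => (L16 + 2 * g δ + 2 * LM) * δ)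
        (nhdsWithin 0 (Ioi 0)) (nhds 0) := by
      have h1 : Tendsto (fun δ : ℝ => (L16 + 2 * LM) * δ) (nhdsWithin 0 (Ioi 0)) (nhds 0) := by
        have := (tendsto_const_nhds (x := L16 + 2 * LM)).mul (tendsto_id (x := nhds (0:ℝ)))
        simpa using tendsto_nhdsWithin_of_tendsto_nhds (s := Ioi (0:ℝ)) this
      have h2 : Tendsto (fun δ : ℝ => 2 * (δ * g δ)) (nhdsWithin 0 (Ioi 0)) (nhds 0) := by
        simpa using (tendsto_const_nhds (x := (2:ℝ))).mul hdg
      have := h1.add h2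
      simp only [add_zero] at this
      refine this.congr fun δ => by ring
    have := Real.continuous_exp.continuousAt.tendsto.comp harg
    simpa [Function.comp_def] using this
  have hexp2 : Tendsto (fun δ : ℝ => Real.exp (LA * (1 - δ)) / (4 * G))
      (nhdsWithin 0 (Ioi 0)) (nhds (A₀ / (4 * G))) := by
    have harg : Tendsto (fun δ : ℝ => LA * (1 - δ)) (nhds 0) (nhds LA) := by
      have hc : ContinuousAt (fun δ : ℝ => LA * (1 - δ)) 0 := by fun_prop
      simpa using hc.tendsto
    have h := ((Real.continuous_exp.continuousAt.tendsto.comp harg).div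
      (tendsto_const_nhds (x := 4 * G)) (by positivity))
    rw [Real.exp_log hA₀] at h
    exact tendsto_nhdsWithin_of_tendsto_nhds (s := Ioi (0:ℝ)) h
  have := hexp2.mul hexp1
  rw [mul_one] at this
  refine Tendsto.congr' ?_ this
  filter_upwards [hmem] with δ hδ
  exact (hSTeq δ hδ).symm
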